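/- Let A and A + E be n×n real symmetric matrices, and let Q = [Q₁ Q₂] be an n×n orthogonal matrix with Q₁ ∈ ℝ^{n×r} and Q₂ ∈ ℝ^{n×(n−r)}, such that the column space of Q₁ is an invariant subspace for A (equivalently, Q₂ᵀ·A·Q₁ = 0). Let sep := min{|μ − ν| : μ an eigenvalue of Q₁ᵀAQ₁, ν an eigenvalue of Q₂ᵀAQ₂}. If sep > 0 and ‖E‖_F ≤ sep/5, then there exists a matrix P ∈ ℝ^{(n−r)×r} with ‖P‖_F ≤ 4·‖Q₁ᵀ·E·Q₂‖_F / sep such that the matrix Q̂₁ = (Q₁ + Q₂·P)·(I_r + PᵀP)^{−1/2} satisfies Q̂₁ᵀ·Q̂₁ = I_r and the column space of Q̂₁ is an invariant subspace for A + E (i.e., there exists an r×r matrix R with (A+E)·Q̂₁ = Q̂₁·R). -/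

import Mathlib

/-!
Write the perturbed invariant subspace as the graph `{Q₁ x + Q₂ P x}` of a matrix `P`. In the
blocks `Lᵢ = Qᵢᵀ A Qᵢ`, `Fᵢⱼ = Qᵢᵀ E Qⱼ`, invariance under `A + E` is the Riccati equation
`L₂ P - P L₁ = -F₂₁ - F₂₂ P + P F₁₁ + P F₁₂ P`. By the spectral gap the Sylvester operator
`P ↦ L₂ P - P L₁` is invertible with inverse of Frobenius norm at most `1 / sep`, and
`‖E‖_F ≤ sep / 5` makes the right-hand side, composed with that inverse, a contraction of the ball
of radius `4 ‖F₂₁‖_F / sep`; its fixed point is `P`. The columns of `Q₁ + Q₂ P` have Gram matrix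
`I + PᵀP`, so multiplying by `(I + PᵀP)^{-1/2}` makes them orthonormal without changing their span.
-/

open Matrix

/-- Frobenius norm of a real matrix: `(tr(MᵀM))^{1/2}`. -/
noncomputable def frobNorm {m n : ℕ} (M : Matrix (Fin m) (Fin n) ℝ) : ℝ :=
  Real.sqrt ((Mᵀ * M).trace)

/-- Nuclear norm of a real matrix: the trace of the positive semidefinite
square root of `MᵀM` (= sum of singular values). -/
noncomputable def nuclearNorm {m n : ℕ} (M : Matrix (Fin m) (Fin n) ℝ) : ℝ :=
  ((Matrix.posSemidef_conjTranspose_mul_self M).1.eigenvectorUnitary.1 *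
    diagonal ((RCLike.ofReal : ℝ → ℝ) ∘ Real.sqrt ∘
      (Matrix.posSemidef_conjTranspose_mul_self M).1.eigenvalues) *
    (star (Matrix.posSemidef_conjTranspose_mul_self M).1.eigenvectorUnitary :
      Matrix (Fin n) (Fin n) ℝ)).trace

/-- Spectral (ℓ2 → ℓ2 operator) norm of a real matrix: its largest singular value. -/
noncomputable def opNorm {m n : ℕ} (M : Matrix (Fin m) (Fin n) ℝ) : ℝ :=
  ‖LinearMap.toContinuousLinearMap (Matrix.toEuclideanLin M)‖

/-- The ℓ1 norm of the vectorization of a matrix. -/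
noncomputable def vecL1 {m n : ℕ} (M : Matrix (Fin m) (Fin n) ℝ) : ℝ :=
  ∑ i, ∑ j, |M i j|

/-- The ℓ∞ norm of the vectorization of a matrix. -/
noncomputable def vecLinf {m n : ℕ} (M : Matrix (Fin m) (Fin n) ℝ) : ℝ :=
  ⨆ i, ⨆ j, |M i j|

/-- Frobenius (trace) inner product of two matrices. -/
noncomputable def traceInner {m n : ℕ} (M N : Matrix (Fin m) (Fin n) ℝ) : ℝ :=
  (Mᵀ * N).trace

open scoped Classical in
/-- The inverse of the positive semidefinite square root of a positive semidefinite
matrix (junk value `0` if the matrix is not positive semidefinite). -/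
noncomputable def matInvSqrt {r : ℕ} (S : Matrix (Fin r) (Fin r) ℝ) :
    Matrix (Fin r) (Fin r) ℝ :=
  if h : S.PosSemidef then
    (h.1.eigenvectorUnitary.1 * diagonal ((RCLike.ofReal : ℝ → ℝ) ∘ Real.sqrt ∘ h.1.eigenvalues) *
      (star h.1.eigenvectorUnitary : Matrix (Fin r) (Fin r) ℝ))⁻¹ else 0

open scoped Matrix.Norms.Frobenius NNReal

section Frobenius

variable {l m n : Type*} [Fintype l] [Fintype m] [Fintype n]

theorem frobenius_norm_sq_eq_trace (M : Matrix m n ℝ) : ‖M‖ ^ 2 = (Mᵀ * M).trace := by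
  rw [frobenius_norm_def, ← Real.rpow_natCast, ← Real.rpow_mul (by positivity), trace,
    Finset.sum_comm]
  norm_num [mul_apply, sq]

theorem frobNorm_eq_norm {m n : ℕ} (M : Matrix (Fin m) (Fin n) ℝ) : frobNorm M = ‖M‖ := by
  rw [frobNorm, ← frobenius_norm_sq_eq_trace, Real.sqrt_sq (norm_nonneg M)]

theorem frobenius_norm_orthogonal_mul [DecidableEq m] {U : Matrix m m ℝ} (hU : Uᵀ * U = 1)
    (M : Matrix m n ℝ) : ‖U * M‖ = ‖M‖ := by
  refine (sq_eq_sq₀ (norm_nonneg _) (norm_nonneg _)).1 ?_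
  rw [frobenius_norm_sq_eq_trace, frobenius_norm_sq_eq_trace, transpose_mul, Matrix.mul_assoc,
    ← Matrix.mul_assoc Uᵀ, hU, Matrix.one_mul]

theorem frobenius_norm_mul_orthogonal [DecidableEq n] {U : Matrix n n ℝ} (hU : U * Uᵀ = 1)
    (M : Matrix m n ℝ) : ‖M * U‖ = ‖M‖ := by
  rw [← frobenius_norm_transpose, transpose_mul,
    frobenius_norm_orthogonal_mul (by rwa [transpose_transpose]), frobenius_norm_transpose]

theorem frobenius_norm_transpose_mul_le {k : Type*} [Fintype k] [DecidableEq m]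
    {Q₁ : Matrix m n ℝ} {Q₂ : Matrix m l ℝ} (hQ : Q₁ * Q₁ᵀ + Q₂ * Q₂ᵀ = 1) (M : Matrix m k ℝ) :
    ‖Q₁ᵀ * M‖ ≤ ‖M‖ := by
  have hsum : ‖Q₁ᵀ * M‖ ^ 2 + ‖Q₂ᵀ * M‖ ^ 2 = ‖M‖ ^ 2 := by
    simp only [frobenius_norm_sq_eq_trace, transpose_mul, transpose_transpose, ← trace_add]
    conv_rhs => rw [← Matrix.mul_one Mᵀ, ← hQ]
    simp only [Matrix.mul_add, Matrix.add_mul, Matrix.mul_assoc]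
  exact (sq_le_sq₀ (norm_nonneg _) (norm_nonneg _)).1 (by nlinarith [sq_nonneg ‖Q₂ᵀ * M‖])

theorem frobenius_norm_transpose_mul_mul_le {k k' : Type*} [Fintype k] [Fintype k']
    [DecidableEq m] {Q₁ : Matrix m n ℝ} {Q₂ : Matrix m l ℝ} {Q₃ : Matrix m k ℝ}
    {Q₄ : Matrix m k' ℝ} (h₁₂ : Q₁ * Q₁ᵀ + Q₂ * Q₂ᵀ = 1) (h₃₄ : Q₃ * Q₃ᵀ + Q₄ * Q₄ᵀ = 1)
    (M : Matrix m m ℝ) : ‖Q₁ᵀ * M * Q₃‖ ≤ ‖M‖ :=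
  calc ‖Q₁ᵀ * M * Q₃‖ = ‖Q₃ᵀ * (Q₁ᵀ * M)ᵀ‖ := by
        rw [← frobenius_norm_transpose, transpose_mul]
    _ ≤ ‖Q₁ᵀ * M‖ := by
        rw [← frobenius_norm_transpose (Q₁ᵀ * M)]; exact frobenius_norm_transpose_mul_le h₃₄ _
    _ ≤ ‖M‖ := frobenius_norm_transpose_mul_le h₁₂ M

theorem mul_frobenius_norm_le_of_abs_le {c : ℝ} (hc : 0 ≤ c) {A B : Matrix m n ℝ}
    (h : ∀ i j, c * |A i j| ≤ |B i j|) : c * ‖A‖ ≤ ‖B‖ := by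
  rw [← Real.norm_of_nonneg hc, ← norm_smul, frobenius_norm_def, frobenius_norm_def]
  gcongr with i _ j _
  simpa [abs_mul, abs_of_nonneg hc] using h i j

theorem frobenius_norm_mul_mul_le {k : Type*} [Fintype k] (A : Matrix l m ℝ) (B : Matrix m n ℝ)
    (C : Matrix n k ℝ) : ‖A * B * C‖ ≤ ‖A‖ * ‖B‖ * ‖C‖ :=
  (frobenius_norm_mul _ _).trans (by gcongr; exact frobenius_norm_mul _ _)

end Frobenius

section Sylvester

variable {p q : Type*} [Fintype p] [Fintype q]

theorem Matrix.IsHermitian.transpose_eigenvectorUnitary_mul_mul [DecidableEq p] {L : Matrix p p ℝ}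
    (hL : L.IsHermitian) :
    (hL.eigenvectorUnitary : Matrix p p ℝ)ᵀ * L * hL.eigenvectorUnitary =
      diagonal hL.eigenvalues := by
  simpa [star_eq_conjTranspose] using hL.conjStarAlgAut_star_eigenvectorUnitary

theorem Matrix.IsHermitian.eigenvectorUnitary_mul_transpose [DecidableEq p] {L : Matrix p p ℝ}
    (hL : L.IsHermitian) :
    (hL.eigenvectorUnitary : Matrix p p ℝ) * (hL.eigenvectorUnitary : Matrix p p ℝ)ᵀ = 1 :=
  mem_unitaryGroup_iff.mp hL.eigenvectorUnitary.2

def sylvesterMap (L₁ : Matrix q q ℝ) (L₂ : Matrix p p ℝ) : Matrix p q ℝ →ₗ[ℝ] Matrix p q ℝ where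
  toFun Z := L₂ * Z - Z * L₁
  map_add' X Y := by simp only [Matrix.mul_add, Matrix.add_mul]; abel
  map_smul' c X := by simp only [Matrix.mul_smul, Matrix.smul_mul, smul_sub, RingHom.id_apply]

theorem sylvesterMap_apply (L₁ : Matrix q q ℝ) (L₂ : Matrix p p ℝ) (Z : Matrix p q ℝ) :
    sylvesterMap L₁ L₂ Z = L₂ * Z - Z * L₁ := rfl

/-- In eigenbases of `L₁` and `L₂` the Sylvester operator multiplies the `(i, j)` entry by an
eigenvalue difference `ν_i - μ_j`, and these orthogonal changes of basis preserve the norm. -/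
theorem mul_norm_le_norm_sylvesterMap [DecidableEq p] [DecidableEq q] {L₁ : Matrix q q ℝ}
    {L₂ : Matrix p p ℝ} (h₁ : L₁.IsHermitian) (h₂ : L₂.IsHermitian) {sep : ℝ} (hsep : 0 ≤ sep)
    (hgap : ∀ μ ∈ spectrum ℝ L₁, ∀ ν ∈ spectrum ℝ L₂, sep ≤ |μ - ν|) (Z : Matrix p q ℝ) :
    sep * ‖Z‖ ≤ ‖sylvesterMap L₁ L₂ Z‖ := by
  set U : Matrix q q ℝ := (h₁.eigenvectorUnitary : Matrix q q ℝ)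
  set V : Matrix p p ℝ := (h₂.eigenvectorUnitary : Matrix p p ℝ)
  have hU : U * Uᵀ = 1 := h₁.eigenvectorUnitary_mul_transpose
  have hV : V * Vᵀ = 1 := h₂.eigenvectorUnitary_mul_transpose
  have hVV : ∀ X : Matrix p q ℝ, V * (Vᵀ * X) = X := fun X => by
    rw [← Matrix.mul_assoc, hV, Matrix.one_mul]
  have hUU : ∀ X : Matrix q q ℝ, U * (Uᵀ * X) = X := fun X => by
    rw [← Matrix.mul_assoc, hU, Matrix.one_mul]
  have hnorm : ∀ X : Matrix p q ℝ, ‖Vᵀ * X * U‖ = ‖X‖ := fun X => by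
    rw [frobenius_norm_mul_orthogonal hU,
      frobenius_norm_orthogonal_mul (by rwa [transpose_transpose])]
  have hdiag : Vᵀ * sylvesterMap L₁ L₂ Z * U =
      diagonal h₂.eigenvalues * (Vᵀ * Z * U) - (Vᵀ * Z * U) * diagonal h₁.eigenvalues := by
    have hD₁ : Uᵀ * L₁ * U = diagonal h₁.eigenvalues := h₁.transpose_eigenvectorUnitary_mul_mul
    have hD₂ : Vᵀ * L₂ * V = diagonal h₂.eigenvalues := h₂.transpose_eigenvectorUnitary_mul_mul
    rw [← hD₁, ← hD₂, sylvesterMap_apply]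
    simp only [Matrix.mul_sub, Matrix.sub_mul, Matrix.mul_assoc, hVV, hUU]
  rw [← hnorm Z, ← hnorm (sylvesterMap L₁ L₂ Z), hdiag]
  refine mul_frobenius_norm_le_of_abs_le hsep fun i j => ?_
  rw [Matrix.sub_apply, diagonal_mul, mul_diagonal, mul_comm _ (h₁.eigenvalues j), ← sub_mul,
    abs_mul, abs_sub_comm]
  exact mul_le_mul_of_nonneg_right (hgap _ (h₁.eigenvalues_mem_spectrum_real j) _
    (h₂.eigenvalues_mem_spectrum_real i)) (abs_nonneg _)

end Sylvester

/-- `T` is invertible with `‖T⁻¹‖ ≤ c⁻¹`, so `T z = φ z` is the fixed-point equation of `T⁻¹ ∘ φ`,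
a contraction of the closed ball of radius `ρ`. -/
theorem exists_norm_le_apply_eq_of_contracting {V : Type*} [NormedAddCommGroup V]
    [NormedSpace ℝ V] [FiniteDimensional ℝ V] (T : V →ₗ[ℝ] V) {c ρ : ℝ} {K : ℝ≥0} (hc : 0 < c)
    (hρ : 0 ≤ ρ) (hK : K < 1) (hT : ∀ z, c * ‖z‖ ≤ ‖T z‖) (φ : V → V)
    (hφ : ∀ z, ‖z‖ ≤ ρ → ‖φ z‖ ≤ c * ρ)
    (hφ_lip : ∀ x y, ‖x‖ ≤ ρ → ‖y‖ ≤ ρ → ‖φ x - φ y‖ ≤ c * K * ‖x - y‖) :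
    ∃ z, ‖z‖ ≤ ρ ∧ T z = φ z := by
  have : CompleteSpace V := FiniteDimensional.complete ℝ V
  have hinj : Function.Injective T := by
    refine (injective_iff_map_eq_zero T).2 fun z hz => norm_le_zero_iff.1 ?_
    have := hT z
    rw [hz, norm_zero] at this
    exact le_of_mul_le_mul_left (by simpa using this) hc
  set e := LinearEquiv.ofInjectiveEndo T hinj
  have hTe : ∀ y, T (e.symm y) = y := e.apply_symm_apply
  have he : ∀ y, c * ‖e.symm y‖ ≤ ‖y‖ := fun y => by simpa only [hTe] using hT (e.symm y)
  set s := Metric.closedBall (0 : V) ρ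
  have hmaps : Set.MapsTo (fun z => e.symm (φ z)) s s := fun z hz => by
    rw [mem_closedBall_zero_iff] at hz ⊢
    exact le_of_mul_le_mul_left ((he _).trans (hφ z hz)) hc
  have hcontr : ContractingWith K (hmaps.restrict _ s s) := by
    refine ⟨hK, LipschitzWith.of_dist_le_mul fun x y => ?_⟩
    have hx := mem_closedBall_zero_iff.1 x.2
    have hy := mem_closedBall_zero_iff.1 y.2
    simp only [Subtype.dist_eq, Set.MapsTo.val_restrict_apply, dist_eq_norm, ← map_sub]
    refine le_of_mul_le_mul_left ((he _).trans ?_) hc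
    linarith [hφ_lip x y hx hy]
  obtain ⟨z, hz, hfix, -⟩ := hcontr.exists_fixedPoint' Metric.isClosed_closedBall.isComplete
    hmaps (Metric.mem_closedBall_self hρ) (edist_ne_top _ _)
  refine ⟨z, mem_closedBall_zero_iff.1 hz, ?_⟩
  conv_lhs => rw [← hfix.eq]
  exact hTe (φ z)

section Riccati

variable {p q : Type*} [Fintype p] [Fintype q] {sep ρ : ℝ} {F₁₁ : Matrix q q ℝ}
  {F₁₂ : Matrix q p ℝ} {F₂₁ : Matrix p q ℝ} {F₂₂ : Matrix p p ℝ}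

theorem norm_riccati_le (hsep : 0 < sep) (h₁₁ : ‖F₁₁‖ ≤ sep / 5) (h₂₂ : ‖F₂₂‖ ≤ sep / 5)
    (h₂₁ : ‖F₂₁‖ ≤ sep / 5) (h₁₂ : ‖F₁₂‖ ≤ ‖F₂₁‖) (hρ : sep * ρ = 4 * ‖F₂₁‖)
    {X : Matrix p q ℝ} (hX : ‖X‖ ≤ ρ) :
    ‖-F₂₁ - F₂₂ * X + X * F₁₁ + X * F₁₂ * X‖ ≤ sep * ρ := by
  have hρ0 : 0 ≤ ρ := (norm_nonneg X).trans hX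
  have hρ45 : ρ ≤ 4 / 5 := by nlinarith
  calc _ ≤ ‖F₂₁‖ + ‖F₂₂‖ * ‖X‖ + ‖X‖ * ‖F₁₁‖ + ‖X‖ * ‖F₁₂‖ * ‖X‖ :=
        norm_add_le_of_le (norm_add_le_of_le
          (norm_sub_le_of_le (norm_neg F₂₁).le (frobenius_norm_mul F₂₂ X))
          (frobenius_norm_mul X F₁₁)) (frobenius_norm_mul_mul_le X F₁₂ X)
    _ ≤ ‖F₂₁‖ + sep / 5 * ρ + ρ * (sep / 5) + ρ * ‖F₂₁‖ * ρ := by gcongr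
    _ ≤ sep * ρ := by nlinarith [mul_le_mul hρ45 hρ45 hρ0 (by norm_num), norm_nonneg F₂₁]

theorem norm_riccati_sub_le (h₁₁ : ‖F₁₁‖ ≤ sep / 5) (h₂₂ : ‖F₂₂‖ ≤ sep / 5)
    (h₂₁ : ‖F₂₁‖ ≤ sep / 5) (h₁₂ : ‖F₁₂‖ ≤ ‖F₂₁‖) (hρ : sep * ρ = 4 * ‖F₂₁‖)
    {X Y : Matrix p q ℝ} (hX : ‖X‖ ≤ ρ) (hY : ‖Y‖ ≤ ρ) :
    ‖(-F₂₁ - F₂₂ * X + X * F₁₁ + X * F₁₂ * X) - (-F₂₁ - F₂₂ * Y + Y * F₁₁ + Y * F₁₂ * Y)‖ ≤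
      sep * (18 / 25) * ‖X - Y‖ := by
  have hρ0 : 0 ≤ ρ := (norm_nonneg X).trans hX
  have hγρ : ‖F₂₁‖ * ρ ≤ 4 * sep / 25 := by nlinarith [norm_nonneg F₂₁]
  have hdiff : (-F₂₁ - F₂₂ * X + X * F₁₁ + X * F₁₂ * X) - (-F₂₁ - F₂₂ * Y + Y * F₁₁ + Y * F₁₂ * Y)
      = -(F₂₂ * (X - Y)) + (X - Y) * F₁₁ + (X - Y) * F₁₂ * X + Y * F₁₂ * (X - Y) := by
    simp only [Matrix.sub_mul, Matrix.mul_sub]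
    abel
  rw [hdiff]
  calc _ ≤ ‖F₂₂‖ * ‖X - Y‖ + ‖X - Y‖ * ‖F₁₁‖ + ‖X - Y‖ * ‖F₁₂‖ * ‖X‖
        + ‖Y‖ * ‖F₁₂‖ * ‖X - Y‖ :=
        norm_add_le_of_le (norm_add_le_of_le (norm_add_le_of_le
          ((norm_neg _).trans_le (frobenius_norm_mul _ _)) (frobenius_norm_mul _ _))
          (frobenius_norm_mul_mul_le _ _ _)) (frobenius_norm_mul_mul_le _ _ _)
    _ ≤ sep / 5 * ‖X - Y‖ + ‖X - Y‖ * (sep / 5) + ‖X - Y‖ * ‖F₂₁‖ * ρ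
        + ρ * ‖F₂₁‖ * ‖X - Y‖ := by gcongr
    _ ≤ sep * (18 / 25) * ‖X - Y‖ := by nlinarith [norm_nonneg (X - Y)]

theorem exists_riccati_solution [DecidableEq p] [DecidableEq q] {L₁ : Matrix q q ℝ}
    {L₂ : Matrix p p ℝ} (h₁ : L₁.IsHermitian) (h₂ : L₂.IsHermitian) (hsep : 0 < sep)
    (hgap : ∀ μ ∈ spectrum ℝ L₁, ∀ ν ∈ spectrum ℝ L₂, sep ≤ |μ - ν|)
    (h₁₁ : ‖F₁₁‖ ≤ sep / 5) (h₂₂ : ‖F₂₂‖ ≤ sep / 5) (h₂₁ : ‖F₂₁‖ ≤ sep / 5)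
    (h₁₂ : ‖F₁₂‖ ≤ ‖F₂₁‖) :
    ∃ P : Matrix p q ℝ, ‖P‖ ≤ 4 * ‖F₂₁‖ / sep ∧
      F₂₁ + (L₂ + F₂₂) * P = P * (L₁ + F₁₁ + F₁₂ * P) := by
  have hρ : sep * (4 * ‖F₂₁‖ / sep) = 4 * ‖F₂₁‖ := mul_div_cancel₀ _ hsep.ne'
  obtain ⟨P, hP, hPeq⟩ := exists_norm_le_apply_eq_of_contracting (sylvesterMap L₁ L₂)
    (K := 18 / 25) hsep (by positivity) (by norm_num)
    (mul_norm_le_norm_sylvesterMap h₁ h₂ hsep.le hgap)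
    (fun X => -F₂₁ - F₂₂ * X + X * F₁₁ + X * F₁₂ * X)
    (fun X hX => norm_riccati_le hsep h₁₁ h₂₂ h₂₁ h₁₂ hρ hX)
    (fun X Y hX hY => by simpa using norm_riccati_sub_le h₁₁ h₂₂ h₂₁ h₁₂ hρ hX hY)
  refine ⟨P, hP, ?_⟩
  rw [sylvesterMap_apply] at hPeq
  calc F₂₁ + (L₂ + F₂₂) * P = F₂₁ + F₂₂ * P + (L₂ * P - P * L₁) + P * L₁ := by
        rw [Matrix.add_mul]; abel
    _ = P * (L₁ + F₁₁ + F₁₂ * P) := by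
        rw [hPeq]; simp only [Matrix.mul_add, Matrix.mul_assoc]; abel

end Riccati

section InvariantSubspace

variable {n k l : Type*} [Fintype n] [Fintype l] {Q₁ : Matrix n k ℝ} {Q₂ : Matrix n l ℝ}

theorem transpose_mul_self_add_mul [DecidableEq k] [DecidableEq l] (hQ₁ : Q₁ᵀ * Q₁ = 1)
    (hQ₂ : Q₂ᵀ * Q₂ = 1) (hQ₁₂ : Q₁ᵀ * Q₂ = 0) (P : Matrix l k ℝ) :
    (Q₁ + Q₂ * P)ᵀ * (Q₁ + Q₂ * P) = 1 + Pᵀ * P := by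
  have hQ₂₁ : Q₂ᵀ * Q₁ = 0 := by rw [← transpose_transpose (Q₂ᵀ * Q₁), transpose_mul,
    transpose_transpose, hQ₁₂, transpose_zero]
  simp only [transpose_add, transpose_mul, Matrix.add_mul, Matrix.mul_add, Matrix.mul_assoc,
    hQ₁, ← Matrix.mul_assoc Q₁ᵀ, ← Matrix.mul_assoc Q₂ᵀ, hQ₂, hQ₁₂, hQ₂₁, Matrix.zero_mul,
    Matrix.mul_zero, add_zero, zero_add, Matrix.one_mul]

theorem mul_add_mul_eq_of_riccati [Fintype k] [DecidableEq n] (hQ : Q₁ * Q₁ᵀ + Q₂ * Q₂ᵀ = 1)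
    (B : Matrix n n ℝ) (P : Matrix l k ℝ)
    (hP : Q₂ᵀ * B * Q₁ + Q₂ᵀ * B * Q₂ * P = P * (Q₁ᵀ * B * Q₁ + Q₁ᵀ * B * Q₂ * P)) :
    B * (Q₁ + Q₂ * P) = (Q₁ + Q₂ * P) * (Q₁ᵀ * B * Q₁ + Q₁ᵀ * B * Q₂ * P) := by
  calc B * (Q₁ + Q₂ * P) = (Q₁ * Q₁ᵀ + Q₂ * Q₂ᵀ) * (B * (Q₁ + Q₂ * P)) := by rw [hQ, Matrix.one_mul]
    _ = Q₁ * (Q₁ᵀ * B * Q₁ + Q₁ᵀ * B * Q₂ * P) + Q₂ * (Q₂ᵀ * B * Q₁ + Q₂ᵀ * B * Q₂ * P) := by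
        simp only [Matrix.add_mul, Matrix.mul_add, Matrix.mul_assoc]; abel
    _ = _ := by rw [hP, Matrix.add_mul, Matrix.mul_assoc Q₂ P]

end InvariantSubspace

section InvSqrt

theorem cfc_sqrt_mul_self {n : Type*} [Fintype n] [DecidableEq n] {S : Matrix n n ℝ}
    (hS : S.PosSemidef) : cfc Real.sqrt S * cfc Real.sqrt S = S := by
  rw [← cfc_mul Real.sqrt Real.sqrt S]
  conv_rhs => rw [← cfc_id' ℝ S hS.1.isSelfAdjoint]
  refine cfc_congr fun x hx => ?_
  obtain ⟨i, rfl⟩ := hS.1.spectrum_real_eq_range_eigenvalues ▸ hx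
  exact Real.mul_self_sqrt (hS.eigenvalues_nonneg i)

theorem isUnit_cfc_sqrt {n : Type*} [Fintype n] [DecidableEq n] {S : Matrix n n ℝ}
    (hS : S.PosDef) : IsUnit (cfc Real.sqrt S) := by
  rw [isUnit_iff_isUnit_det]
  refine isUnit_of_mul_isUnit_left (y := (cfc Real.sqrt S).det) ?_
  rw [← det_mul, cfc_sqrt_mul_self hS.posSemidef, ← isUnit_iff_isUnit_det]
  exact hS.isUnit

variable {r : ℕ} {S : Matrix (Fin r) (Fin r) ℝ}

theorem matInvSqrt_eq_inv_cfc_sqrt (hS : S.PosSemidef) : matInvSqrt S = (cfc Real.sqrt S)⁻¹ := by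
  rw [matInvSqrt, dif_pos hS, hS.1.cfc_eq]
  rfl

theorem transpose_matInvSqrt (hS : S.PosSemidef) : (matInvSqrt S)ᵀ = matInvSqrt S := by
  rw [matInvSqrt_eq_inv_cfc_sqrt hS, transpose_nonsing_inv]
  congr 1
  exact (cfc_predicate Real.sqrt S : IsSelfAdjoint _)

theorem isUnit_matInvSqrt (hS : S.PosDef) : IsUnit (matInvSqrt S) := by
  rw [matInvSqrt_eq_inv_cfc_sqrt hS.posSemidef, isUnit_nonsing_inv_iff]
  exact isUnit_cfc_sqrt hS

theorem matInvSqrt_mul_mul_matInvSqrt (hS : S.PosDef) :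
    matInvSqrt S * S * matInvSqrt S = 1 := by
  have hdet := (isUnit_iff_isUnit_det _).1 (isUnit_cfc_sqrt hS)
  calc matInvSqrt S * S * matInvSqrt S
      = (cfc Real.sqrt S)⁻¹ * (cfc Real.sqrt S * cfc Real.sqrt S) * (cfc Real.sqrt S)⁻¹ := by
        rw [matInvSqrt_eq_inv_cfc_sqrt hS.posSemidef, cfc_sqrt_mul_self hS.posSemidef]
    _ = 1 := by
        rw [← Matrix.mul_assoc, nonsing_inv_mul _ hdet, Matrix.one_mul, mul_nonsing_inv _ hdet]

theorem orthonormal_invariant_mul_matInvSqrt {m : Type*} [Fintype m] {X : Matrix m (Fin r) ℝ}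
    {B : Matrix m m ℝ} {R : Matrix (Fin r) (Fin r) ℝ} (hXS : Xᵀ * X = S) (hS : S.PosDef)
    (hBX : B * X = X * R) :
    (X * matInvSqrt S)ᵀ * (X * matInvSqrt S) = 1 ∧
      ∃ R' : Matrix (Fin r) (Fin r) ℝ, B * (X * matInvSqrt S) = X * matInvSqrt S * R' := by
  refine ⟨?_, (matInvSqrt S)⁻¹ * R * matInvSqrt S, ?_⟩
  · rw [transpose_mul, transpose_matInvSqrt hS.posSemidef, Matrix.mul_assoc, ← Matrix.mul_assoc Xᵀ,
      hXS, ← Matrix.mul_assoc]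
    exact matInvSqrt_mul_mul_matInvSqrt hS
  · have hdet := (isUnit_iff_isUnit_det _).1 (isUnit_matInvSqrt hS)
    rw [← Matrix.mul_assoc, hBX, Matrix.mul_assoc X, Matrix.mul_assoc X,
      ← Matrix.mul_assoc (matInvSqrt S), ← Matrix.mul_assoc (matInvSqrt S),
      mul_nonsing_inv _ hdet, Matrix.one_mul]

end InvSqrt

/-- Lemma A1: matrix perturbation result for invariant subspaces of symmetric matrices. -/
theorem stmt_2
    (n r : ℕ)
    (A E : Matrix (Fin n) (Fin n) ℝ)
    (hA : A.IsSymm) (hAE : (A + E).IsSymm)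
    (Q₁ : Matrix (Fin n) (Fin r) ℝ) (Q₂ : Matrix (Fin n) (Fin (n - r)) ℝ)
    (hQ₁ : Q₁ᵀ * Q₁ = 1) (hQ₂ : Q₂ᵀ * Q₂ = 1) (hQ₁₂ : Q₁ᵀ * Q₂ = 0)
    (hQfull : Q₁ * Q₁ᵀ + Q₂ * Q₂ᵀ = 1)
    (hinv : Q₂ᵀ * A * Q₁ = 0)
    (sep : ℝ)
    (hsepdef : sep =
      sInf {x : ℝ | ∃ μ ∈ spectrum ℝ (Q₁ᵀ * A * Q₁),
        ∃ ν ∈ spectrum ℝ (Q₂ᵀ * A * Q₂), x = |μ - ν|})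
    (hsep : 0 < sep)
    (hE : frobNorm E ≤ sep / 5) :
    ∃ P : Matrix (Fin (n - r)) (Fin r) ℝ,
      frobNorm P ≤ 4 * frobNorm (Q₁ᵀ * E * Q₂) / sep ∧
      ((Q₁ + Q₂ * P) * matInvSqrt (1 + Pᵀ * P))ᵀ
          * ((Q₁ + Q₂ * P) * matInvSqrt (1 + Pᵀ * P)) = 1 ∧
      ∃ R : Matrix (Fin r) (Fin r) ℝ,
        (A + E) * ((Q₁ + Q₂ * P) * matInvSqrt (1 + Pᵀ * P))
          = ((Q₁ + Q₂ * P) * matInvSqrt (1 + Pᵀ * P)) * R := by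
  have hEsymm : E.IsSymm := by simpa using hAE.sub hA
  have hAh : A.IsHermitian := isHermitian_iff_isSymm.2 hA
  have h₁ : (Q₁ᵀ * A * Q₁).IsHermitian := by simpa using isHermitian_conjTranspose_mul_mul Q₁ hAh
  have h₂ : (Q₂ᵀ * A * Q₂).IsHermitian := by simpa using isHermitian_conjTranspose_mul_mul Q₂ hAh
  have hgap : ∀ μ ∈ spectrum ℝ (Q₁ᵀ * A * Q₁), ∀ ν ∈ spectrum ℝ (Q₂ᵀ * A * Q₂), sep ≤ |μ - ν| :=
    fun μ hμ ν hν => hsepdef ▸ csInf_le ⟨0, by rintro _ ⟨_, -, _, -, rfl⟩; exact abs_nonneg _⟩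
      ⟨μ, hμ, ν, hν, rfl⟩
  have hQfull' : Q₂ * Q₂ᵀ + Q₁ * Q₁ᵀ = 1 := (add_comm _ _).trans hQfull
  rw [frobNorm_eq_norm] at hE
  have hE₁₂ : ‖Q₁ᵀ * E * Q₂‖ = ‖Q₂ᵀ * E * Q₁‖ := by
    rw [← frobenius_norm_transpose, transpose_mul, transpose_mul, hEsymm.eq, transpose_transpose,
      Matrix.mul_assoc]
  obtain ⟨P, hP, hRic⟩ := exists_riccati_solution h₁ h₂ hsep hgap
    ((frobenius_norm_transpose_mul_mul_le hQfull hQfull E).trans hE)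
    ((frobenius_norm_transpose_mul_mul_le hQfull' hQfull' E).trans hE)
    ((frobenius_norm_transpose_mul_mul_le hQfull' hQfull E).trans hE) hE₁₂.le
  have hA₁₂ : Q₁ᵀ * A * Q₂ = 0 := by
    simpa [transpose_mul, hA.eq, Matrix.mul_assoc] using congrArg transpose hinv
  have hblock : ∀ {k l : ℕ} (Qa : Matrix (Fin n) (Fin k) ℝ) (Qb : Matrix (Fin n) (Fin l) ℝ),
      Qaᵀ * (A + E) * Qb = Qaᵀ * A * Qb + Qaᵀ * E * Qb := fun _ _ => by
    rw [Matrix.mul_add, Matrix.add_mul]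
  have hBX := mul_add_mul_eq_of_riccati hQfull (A + E) P (by
    simpa only [hblock, hinv, hA₁₂, zero_add] using hRic)
  refine ⟨P, ?_, orthonormal_invariant_mul_matInvSqrt
    (transpose_mul_self_add_mul hQ₁ hQ₂ hQ₁₂ P)
    (PosDef.one.add_posSemidef (posSemidef_conjTranspose_mul_self P)) hBX⟩
  rw [frobNorm_eq_norm, frobNorm_eq_norm, hE₁₂]
  exact hP
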